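/- arXiv:2507.09710 — 4 statements merged into one kernel-verified Lean document; each statement's English description precedes it below -/
import Mathlib

section
/- Let F = rG be the disjoint union of r copies of a connected graph G. If G is rigid (its only automorphism is the identity), then Fix(F) = r − 1; otherwise Fix(F) = r · Fix(G). -/
open SimpleGraph

/-- `φ` is a distinguishing labeling of `G`: the only automorphism preserving `φ` is the identity. -/
def IsDist {V α : Type*} (G : SimpleGraph V) (φ : V → α) : Prop :=
  ∀ π : G ≃g G, (∀ v, φ (π v) = φ v) → ∀ v, π v = v

/-- The distinguishing number `D(G)`. -/
noncomputable def distNum {V : Type*} (G : SimpleGraph V) : ℕ :=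
  sInf {c : ℕ | ∃ φ : V → Fin c, IsDist G φ}

/-- `S` is a fixing set of `G`. -/
def IsFixingSet {V : Type*} (G : SimpleGraph V) (S : Set V) : Prop :=
  ∀ π : G ≃g G, (∀ v ∈ S, π v = v) → ∀ v, π v = v

/-- The fixing number `Fix(G)`. -/
noncomputable def fixNum {V : Type*} (G : SimpleGraph V) : ℕ :=
  sInf {n : ℕ | ∃ S : Set V, S.ncard = n ∧ IsFixingSet G S}

/-- `D(G, c)`: the number of pairwise inequivalent distinguishing labelings of `G`
using at most `c` colors. -/
noncomputable def countDist {V : Type*} (G : SimpleGraph V) (c : ℕ) : ℕ :=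
  Nat.card (Quot (fun φ ψ : {φ : V → Fin c // IsDist G φ} =>
    ∃ π : G ≃g G, ∀ v, φ.1 v = ψ.1 (π v)))

/-- The disjoint union of `r` copies of `G`. -/
def copies {V : Type*} (r : ℕ) (G : SimpleGraph V) : SimpleGraph (Fin r × V) where
  Adj x y := x.1 = y.1 ∧ G.Adj x.2 y.2
  symm := by
    constructor
    rintro ⟨i, u⟩ ⟨j, v⟩ ⟨h1, h2⟩
    exact ⟨h1.symm, h2.symm⟩
  loopless := by
    constructor
    rintro ⟨i, u⟩ ⟨-, h⟩
    exact G.loopless.irrefl u h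

/-!
Because `G` is connected, every automorphism of `rG` permutes the copies and acts on each copy by
an automorphism of `G`. If `G` is rigid, a set fixes `rG` exactly when it meets all copies but at
most one, since two untouched copies can be swapped. Otherwise the trace of a fixing set on each
copy must fix `G`, giving `r * Fix(G)` from below; and a minimum fixing set of `G` is nonempty, so
placing it in every copy also pins down the permutation of the copies.
-/

section

variable {V : Type*} {r : ℕ} {G : SimpleGraph V}

theorem Equiv.Perm.eq_one_of_subsingleton {α : Type*} {σ : Equiv.Perm α}
    (h : {a | σ a ≠ a}.Subsingleton) : σ = 1 := by
  ext a
  by_contra ha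
  exact ha (h (σ.injective.ne ha) ha)

theorem fixNum_le {S : Set V} (hS : IsFixingSet G S) : fixNum G ≤ S.ncard :=
  Nat.sInf_le ⟨S, rfl, hS⟩

theorem isFixingSet_univ (G : SimpleGraph V) : IsFixingSet G Set.univ :=
  fun _ h v => h v trivial

theorem le_fixNum {n : ℕ} (h : ∀ S, IsFixingSet G S → n ≤ S.ncard) : n ≤ fixNum G :=
  le_csInf ⟨_, Set.univ, rfl, isFixingSet_univ G⟩ (by rintro _ ⟨S, rfl, hS⟩; exact h S hS)

theorem exists_isFixingSet_ncard_eq_fixNum (G : SimpleGraph V) :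
    ∃ S, IsFixingSet G S ∧ S.ncard = fixNum G := by
  have hne : {n | ∃ S : Set V, S.ncard = n ∧ IsFixingSet G S}.Nonempty :=
    ⟨_, Set.univ, rfl, isFixingSet_univ G⟩
  obtain ⟨S, hcard, hS⟩ := Nat.sInf_mem hne
  exact ⟨S, hS, hcard⟩

theorem Set.ncard_eq_sum_ncard_slices {ι : Type*} [Fintype ι] [Finite V] (S : Set (ι × V)) :
    S.ncard = ∑ i, {v | (i, v) ∈ S}.ncard := by
  let e : S ≃ Σ i, {v | (i, v) ∈ S} :=
    { toFun p := ⟨p.1.1, p.1.2, p.2⟩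
      invFun q := ⟨(q.1, q.2.1), q.2.2⟩ }
  simp only [← Nat.card_coe_set_eq, Nat.card_congr e, Nat.card_sigma]

variable (G) in
def copiesAut (σ : Equiv.Perm (Fin r)) (e : Fin r → G ≃g G) : copies r G ≃g copies r G where
  toFun x := (σ x.1, e x.1 x.2)
  invFun x := (σ.symm x.1, (e (σ.symm x.1)).symm x.2)
  left_inv := by rintro ⟨i, v⟩; simp
  right_inv := by rintro ⟨i, v⟩; simp
  map_rel_iff' := by
    rintro ⟨i, u⟩ ⟨j, v⟩
    change σ i = σ j ∧ G.Adj (e i u) (e j v) ↔ i = j ∧ G.Adj u v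
    constructor
    · rintro ⟨h, hadj⟩
      obtain rfl := σ.injective h
      exact ⟨rfl, (e i).map_adj_iff.1 hadj⟩
    · rintro ⟨rfl, hadj⟩
      exact ⟨rfl, (e i).map_adj_iff.2 hadj⟩

theorem copiesAut_apply_eq_self_iff {σ : Equiv.Perm (Fin r)} {e : Fin r → G ≃g G} {i : Fin r}
    {v : V} : copiesAut G σ e (i, v) = (i, v) ↔ σ i = i ∧ e i v = v :=
  Prod.ext_iff

theorem SimpleGraph.Connected.fst_copies_apply_eq (hG : G.Connected)
    (π : copies r G ≃g copies r G) (i : Fin r) (v w : V) : (π (i, v)).1 = (π (i, w)).1 := by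
  obtain ⟨p⟩ := hG.preconnected v w
  induction p with
  | nil => rfl
  | @cons u v w hadj _ ih =>
    exact (π.map_adj_iff.2 (⟨rfl, hadj⟩ : (copies r G).Adj (i, u) (i, v))).1.trans ih

theorem SimpleGraph.Connected.fst_copies_symm_apply (hG : G.Connected)
    (π : copies r G ≃g copies r G) (i : Fin r) (v w : V) : (π.symm ((π (i, v)).1, w)).1 = i := by
  rw [hG.fst_copies_apply_eq π.symm _ w (π (i, v)).2, Prod.mk.eta, RelIso.symm_apply_apply]

theorem SimpleGraph.Connected.exists_eq_copiesAut (hG : G.Connected)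
    (π : copies r G ≃g copies r G) : ∃ σ e, π = copiesAut G σ e := by
  obtain ⟨v₀⟩ := hG.nonempty
  have adj_iff (i : Fin r) (u v : V) : G.Adj (π (i, u)).2 (π (i, v)).2 ↔ G.Adj u v :=
    ⟨fun h => (π.map_adj_iff.1 ⟨hG.fst_copies_apply_eq π i u v, h⟩).2,
      fun h => (π.map_adj_iff.2 (⟨rfl, h⟩ : (copies r G).Adj (i, u) (i, v))).2⟩
  let σ : Equiv.Perm (Fin r) :=
    { toFun i := (π (i, v₀)).1
      invFun j := (π.symm (j, v₀)).1
      left_inv i := hG.fst_copies_symm_apply π i v₀ v₀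
      right_inv j := by simpa using hG.fst_copies_symm_apply π.symm j v₀ v₀ }
  let e (i : Fin r) : G ≃g G :=
    { toFun v := (π (i, v)).2
      invFun w := (π.symm ((π (i, v₀)).1, w)).2
      left_inv v := by
        simp only [hG.fst_copies_apply_eq π i v₀ v, Prod.mk.eta, RelIso.symm_apply_apply]
      right_inv w := by
        have h : (i, (π.symm ((π (i, v₀)).1, w)).2) = π.symm ((π (i, v₀)).1, w) :=
          Prod.ext (hG.fst_copies_symm_apply π i v₀ w).symm rfl
        simp only [h, RelIso.apply_symm_apply]
      map_rel_iff' := adj_iff i _ _ }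
  exact ⟨σ, e, RelIso.ext fun ⟨i, v⟩ => Prod.ext (hG.fst_copies_apply_eq π i v v₀) rfl⟩

theorem IsFixingSet.of_copies {S : Set (Fin r × V)} (hS : IsFixingSet (copies r G) S)
    (i : Fin r) : IsFixingSet G {v | (i, v) ∈ S} := by
  classical
  intro τ hτ v
  have hfix : ∀ p ∈ S, copiesAut G 1 (Pi.mulSingle i τ) p = p := by
    rintro ⟨j, w⟩ hw
    refine copiesAut_apply_eq_self_iff.2 ⟨rfl, ?_⟩
    obtain rfl | hj := eq_or_ne j i
    · simpa using hτ w hw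
    · simp [Pi.mulSingle_eq_of_ne hj]
  simpa using (copiesAut_apply_eq_self_iff.1 (hS _ hfix (i, v))).2

theorem IsFixingSet.univ_prod_copies (hG : G.Connected) {T : Set V} (hT : IsFixingSet G T)
    (hne : T.Nonempty) : IsFixingSet (copies r G) (Set.univ ×ˢ T) := by
  intro π hπ
  obtain ⟨σ, e, rfl⟩ := hG.exists_eq_copiesAut π
  obtain ⟨t, ht⟩ := hne
  have h (i : Fin r) (v : V) (hv : v ∈ T) : σ i = i ∧ e i v = v :=
    copiesAut_apply_eq_self_iff.1 (hπ (i, v) ⟨trivial, hv⟩)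
  rintro ⟨i, v⟩
  exact copiesAut_apply_eq_self_iff.2 ⟨(h i t ht).1, hT (e i) (fun v hv => (h i v hv).2) v⟩

theorem isFixingSet_copies_iff_of_rigid (hG : G.Connected)
    (hrig : ∀ π : G ≃g G, ∀ v, π v = v) {S : Set (Fin r × V)} :
    IsFixingSet (copies r G) S ↔ (Prod.fst '' S)ᶜ.Subsingleton := by
  constructor
  · intro hS i hi j hj
    obtain ⟨v₀⟩ := hG.nonempty
    by_contra hij
    have hfix : ∀ p ∈ S, copiesAut G (Equiv.swap i j) 1 p = p := by
      rintro ⟨k, w⟩ hk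
      exact copiesAut_apply_eq_self_iff.2
        ⟨Equiv.swap_apply_of_ne_of_ne (fun h => hi ⟨_, hk, h⟩) (fun h => hj ⟨_, hk, h⟩), rfl⟩
    have := (copiesAut_apply_eq_self_iff.1 (hS _ hfix (i, v₀))).1
    exact hij (by simpa using this.symm)
  · intro hsub π hπ
    obtain ⟨σ, e, rfl⟩ := hG.exists_eq_copiesAut π
    have hσ : σ = 1 := by
      refine Equiv.Perm.eq_one_of_subsingleton (hsub.anti ?_)
      rintro i hi ⟨⟨j, w⟩, hw, rfl⟩
      exact hi (copiesAut_apply_eq_self_iff.1 (hπ _ hw)).1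
    rintro ⟨i, v⟩
    exact copiesAut_apply_eq_self_iff.2 ⟨by rw [hσ]; rfl, hrig _ v⟩

theorem fixNum_copies_of_rigid [Finite V] (hG : G.Connected)
    (hrig : ∀ π : G ≃g G, ∀ v, π v = v) : fixNum (copies r G) = r - 1 := by
  obtain ⟨v₀⟩ := hG.nonempty
  apply le_antisymm
  · let mark : Fin (r - 1) → Fin r × V := fun k => (⟨k + 1, by omega⟩, v₀)
    have hmark : Function.Injective mark := fun a b h => by
      ext
      simpa [mark] using h
    have hmiss : (Prod.fst '' Set.range mark)ᶜ.Subsingleton := by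
      have key (k : Fin r) (hk : k ∉ Prod.fst '' Set.range mark) : (k : ℕ) = 0 := by
        by_contra h
        exact hk ⟨mark ⟨k - 1, by omega⟩, ⟨_, rfl⟩, Fin.ext (by simp [mark]; omega)⟩
      exact fun i hi j hj => Fin.ext ((key i hi).trans (key j hj).symm)
    calc fixNum (copies r G) ≤ (Set.range mark).ncard :=
          fixNum_le ((isFixingSet_copies_iff_of_rigid hG hrig).2 hmiss)
      _ = r - 1 := by rw [Set.ncard_range_of_injective hmark, Nat.card_fin]
  · refine le_fixNum fun S hS => ?_
    have hcompl : (Prod.fst '' S)ᶜ.ncard ≤ 1 :=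
      Set.ncard_le_one_iff_subsingleton.2 ((isFixingSet_copies_iff_of_rigid hG hrig).1 hS)
    have hsplit := Set.ncard_add_ncard_compl (Prod.fst '' S)
    have himage : (Prod.fst '' S).ncard ≤ S.ncard := Set.ncard_image_le S.toFinite
    rw [Nat.card_fin] at hsplit
    omega

theorem fixNum_copies_of_not_rigid [Finite V] (hG : G.Connected)
    (hnrig : ¬ ∀ π : G ≃g G, ∀ v, π v = v) : fixNum (copies r G) = r * fixNum G := by
  apply le_antisymm
  · obtain ⟨T, hT, hcard⟩ := exists_isFixingSet_ncard_eq_fixNum G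
    have hne : T.Nonempty := Set.nonempty_iff_ne_empty.2 <| by
      rintro rfl
      exact hnrig fun π => hT π (by simp)
    calc fixNum (copies r G) ≤ (Set.univ ×ˢ T).ncard := fixNum_le (hT.univ_prod_copies hG hne)
      _ = r * fixNum G := by rw [Set.ncard_prod, Set.ncard_univ, Nat.card_fin, hcard]
  · refine le_fixNum fun S hS => ?_
    calc r * fixNum G = ∑ _i : Fin r, fixNum G := by simp
      _ ≤ ∑ i, {v | (i, v) ∈ S}.ncard :=
          Finset.sum_le_sum fun i _ => fixNum_le (hS.of_copies i)
      _ = S.ncard := (Set.ncard_eq_sum_ncard_slices S).symm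

end

theorem fix_copies_general {V : Type*} [Fintype V] (G : SimpleGraph V) (hG : G.Connected)
    (r : ℕ) :
    ((∀ π : G ≃g G, ∀ v, π v = v) → fixNum (copies r G) = r - 1) ∧
    (¬ (∀ π : G ≃g G, ∀ v, π v = v) → fixNum (copies r G) = r * fixNum G) :=
  ⟨fixNum_copies_of_rigid hG, fixNum_copies_of_not_rigid hG⟩

/-- For `F = rG` the disjoint union of `r` copies of a connected graph `G`:
if `G` is rigid then `Fix(F) = r - 1`, and otherwise `Fix(F) = r * Fix(G)`. -/
theorem fix_copies {V : Type*} [Fintype V] (G : SimpleGraph V) (hG : G.Connected)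
    (r : ℕ) (hr : 1 ≤ r) :
    ((∀ π : G ≃g G, ∀ v, π v = v) → fixNum (copies r G) = r - 1) ∧
    (¬ (∀ π : G ≃g G, ∀ v, π v = v) → fixNum (copies r G) = r * fixNum G) :=
  fix_copies_general G hG r
end

section
/- Let T be a rooted tree with root r(T), and let the subtrees rooted at the children of r(T) fall into g rooted-isomorphism classes, the j-th class consisting of m_j copies of T_j. Then Fix(T) = Σ_{j=1}^{g} [ (m_j − 1) if Fix(T_j) = 0, and m_j · Fix(T_j) otherwise ], where Fix is computed with respect to root-preserving automorphisms. -/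
open SimpleGraph

/-- A distinguishing labeling of the graph `G` rooted at `r`:
the only root-preserving automorphism preserving `φ` is the identity. -/
def IsRDist {V α : Type*} (G : SimpleGraph V) (r : V) (φ : V → α) : Prop :=
  ∀ π : G ≃g G, π r = r → (∀ v, φ (π v) = φ v) → ∀ v, π v = v

/-- The distinguishing number of the graph `G` rooted at `r`. -/
noncomputable def rdistNum {V : Type*} (G : SimpleGraph V) (r : V) : ℕ :=
  sInf {c : ℕ | ∃ φ : V → Fin c, IsRDist G r φ}

/-- The number of pairwise inequivalent (under root-preserving automorphisms)
distinguishing labelings of the rooted graph `(G, r)` using at most `c` colors. -/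
noncomputable def rcountDist {V : Type*} (G : SimpleGraph V) (r : V) (c : ℕ) : ℕ :=
  Nat.card (Quot (fun φ ψ : {φ : V → Fin c // IsRDist G r φ} =>
    ∃ π : G ≃g G, π r = r ∧ ∀ v, φ.1 v = ψ.1 (π v)))

/-- `S` is a fixing set of the graph `G` rooted at `r` (w.r.t. root-preserving automorphisms). -/
def IsRFix {V : Type*} (G : SimpleGraph V) (r : V) (S : Set V) : Prop :=
  ∀ π : G ≃g G, π r = r → (∀ v ∈ S, π v = v) → ∀ v, π v = v

/-- The fixing number of the graph `G` rooted at `r`. -/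
noncomputable def rfixNum {V : Type*} (G : SimpleGraph V) (r : V) : ℕ :=
  sInf {n : ℕ | ∃ S : Set V, S.ncard = n ∧ IsRFix G r S}

/-- A rooted isomorphism between `(G, r)` and `(H, s)`. -/
def RootedIso {V W : Type*} (G : SimpleGraph V) (r : V) (H : SimpleGraph W) (s : W) : Prop :=
  ∃ e : G ≃g H, e r = s

/-- The vertex set of the subtree hanging below `y` in the tree `T` rooted at `r`:
vertices reachable from `y` by a walk avoiding `r`. -/
def subSet {V : Type*} (T : SimpleGraph V) (r y : V) : Set V :=
  {v | ∃ p : T.Walk y v, r ∉ p.support}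

/-- The subtree of `T` (rooted at `r`) hanging below `y`, as an induced subgraph. -/
def subTree {V : Type*} (T : SimpleGraph V) (r y : V) : SimpleGraph (subSet T r y) :=
  T.induce (subSet T r y)

/-- The root of the subtree hanging below `y`, namely `y` itself. -/
def subRoot {V : Type*} (T : SimpleGraph V) (r y : V) (h : y ≠ r) : subSet T r y :=
  ⟨y, SimpleGraph.Walk.nil, by simpa [SimpleGraph.Walk.support_nil] using h.symm⟩

/-!
Every vertex other than the root lies in the subtree below exactly one child of the root. A
root-preserving automorphism permutes these subtrees, mapping each onto a rooted-isomorphic one;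
conversely, an automorphism of a single subtree, or an exchange of two rooted-isomorphic subtrees,
extends by the identity to a root-preserving automorphism of `T`.

Hence a fixing set of `T` restricts to a fixing set of every subtree, and it meets all but at most
one subtree of each class with `Fix(T_j) = 0`, as otherwise two untouched copies could be
exchanged: this is the lower bound. For the upper bound, take a minimum fixing set in every
subtree with `Fix(T_j) > 0`, and the root of every subtree with `Fix(T_j) = 0` except that of the
representative `T_j` itself. It fixes all children of the root (the representatives because every
other child of their class is fixed), and then everything below them.
-/

lemma Finset.card_sub_one_le_sum {ι : Type*} (s : Finset ι) (n : ι → ℕ)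
    (h : ∀ i ∈ s, ∀ j ∈ s, n i = 0 → n j = 0 → i = j) : s.card - 1 ≤ ∑ i ∈ s, n i := by
  classical
  have hzero : (s.filter (n · = 0)).card ≤ 1 := Finset.card_le_one.2 fun i hi j hj => by
    rw [Finset.mem_filter] at hi hj
    exact h i hi.1 j hj.1 hi.2 hj.2
  have hpos : (s.filter (¬ n · = 0)).card ≤ ∑ i ∈ s, n i :=
    calc (s.filter (¬ n · = 0)).card = ∑ i ∈ s.filter (¬ n · = 0), 1 :=
          Finset.card_eq_sum_ones _
      _ ≤ ∑ i ∈ s.filter (¬ n · = 0), n i := Finset.sum_le_sum fun i hi =>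
          Nat.one_le_iff_ne_zero.2 (Finset.mem_filter.1 hi).2
      _ ≤ ∑ i ∈ s, n i := Finset.sum_le_sum_of_subset (Finset.filter_subset _ _)
  have := Finset.card_filter_add_card_filter_not (s := s) (n · = 0)
  omega

lemma Finset.sum_ite_eq_card_sub_one {ι : Type*} [DecidableEq ι] {s : Finset ι} {x : ι}
    (hx : x ∈ s) : ∑ i ∈ s, (if i = x then 0 else 1) = s.card - 1 := by
  rw [← Finset.card_erase_of_mem hx, ← Finset.filter_ne', Finset.card_filter]
  exact Finset.sum_congr rfl fun i _ => (ite_not _ _ _).symm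

lemma Finset.card_filter_subtype {α β : Type*} [Fintype α] (p : α → Prop) [DecidablePred p]
    (f : α → β) [DecidableEq β] (b : β) :
    ({x : {x // p x} | f x = b} : Finset {x // p x}).card = Nat.card {x // p x ∧ f x = b} := by
  rw [Nat.card_eq_fintype_card, ← Fintype.card_congr
    (Equiv.subtypeSubtypeEquivSubtypeInter p (f · = b)), Fintype.card_subtype]

section RootedFixingSets

variable {V W : Type*} {G : SimpleGraph V} {H : SimpleGraph W} {r : V} {s : W}

lemma RootedIso.symm (h : RootedIso G r H s) : RootedIso H s G r :=
  let ⟨e, he⟩ := h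
  ⟨e.symm, e.symm_apply_eq.2 he.symm⟩

lemma RootedIso.trans {X : Type*} {K : SimpleGraph X} {t : X} (h₁ : RootedIso G r H s)
    (h₂ : RootedIso H s K t) : RootedIso G r K t :=
  let ⟨e₁, he₁⟩ := h₁
  let ⟨e₂, he₂⟩ := h₂
  ⟨e₁.trans e₂, by simp [he₁, he₂]⟩

lemma IsRFix.mono {S S' : Set V} (hS : IsRFix G r S) (h : S ⊆ S') : IsRFix G r S' :=
  fun π hπ hfix => hS π hπ fun v hv => hfix v (h hv)

lemma IsRFix.image {S : Set V} (hS : IsRFix G r S) (e : G ≃g H) (he : e r = s) :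
    IsRFix H s (e '' S) := by
  intro π hπ hfix w
  have hconj : ∀ v, (e.trans (π.trans e.symm)) v = v := by
    refine hS _ (by simp [he, hπ, e.symm_apply_eq]) fun v hv => ?_
    simp [hfix (e v) ⟨v, hv, rfl⟩]
  simpa using congrArg e (hconj (e.symm w))

lemma IsRFix.rfixNum_le {S : Set V} (hS : IsRFix G r S) : rfixNum G r ≤ S.ncard :=
  Nat.sInf_le ⟨S, rfl, hS⟩

lemma exists_isRFix_ncard_eq_rfixNum [Finite V] (G : SimpleGraph V) (r : V) :
    ∃ S : Set V, S.ncard = rfixNum G r ∧ IsRFix G r S :=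
  Nat.sInf_mem (s := {n | ∃ S : Set V, S.ncard = n ∧ IsRFix G r S})
    ⟨_, Set.univ, rfl, fun _ _ h v => h v trivial⟩

lemma isRFix_of_rfixNum_eq_zero [Finite V] (h : rfixNum G r = 0) (S : Set V) :
    IsRFix G r S := by
  obtain ⟨S₀, hcard, hS₀⟩ := exists_isRFix_ncard_eq_rfixNum G r
  rw [h, Set.ncard_eq_zero] at hcard
  exact hS₀.mono (hcard ▸ S.empty_subset)

lemma RootedIso.rfixNum_le [Finite V] (h : RootedIso G r H s) : rfixNum H s ≤ rfixNum G r := by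
  obtain ⟨e, he⟩ := h
  obtain ⟨S, hcard, hS⟩ := exists_isRFix_ncard_eq_rfixNum G r
  calc rfixNum H s ≤ (e '' S).ncard := (hS.image e he).rfixNum_le
    _ = rfixNum G r := by rw [Set.ncard_image_of_injective _ e.injective, hcard]

lemma RootedIso.rfixNum_eq [Finite V] [Finite W] (h : RootedIso G r H s) :
    rfixNum G r = rfixNum H s :=
  h.symm.rfixNum_le.antisymm h.rfixNum_le

end RootedFixingSets

section Subtrees

variable {V : Type*} {T : SimpleGraph V} {r y : V}

lemma mem_subSet_self (h : y ≠ r) : y ∈ subSet T r y :=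
  (subRoot T r y h).2

lemma root_notMem_subSet : r ∉ subSet T r y :=
  fun ⟨p, hp⟩ => hp p.end_mem_support

lemma mem_subSet_of_adj {u v : V} (hu : u ∈ subSet T r y) (huv : T.Adj u v) (hv : v ≠ r) :
    v ∈ subSet T r y := by
  obtain ⟨p, hp⟩ := hu
  refine ⟨p.concat huv, ?_⟩
  rw [Walk.support_concat, List.mem_append, List.mem_singleton]
  rintro (h | h)
  exacts [hp h, hv h.symm]

lemma map_mem_subSet {W : Type*} {H : SimpleGraph W} {s : W} (e : T ≃g H) (he : e r = s)
    {v : V} (hv : v ∈ subSet T r y) : e v ∈ subSet H s (e y) := by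
  obtain ⟨p, hp⟩ := hv
  refine ⟨p.map e.toHom, fun h => hp ?_⟩
  rw [Walk.support_map] at h
  obtain ⟨a, ha, hea⟩ := List.mem_map.1 h
  rwa [← e.injective (hea.trans he.symm)]

lemma image_subSet (π : T ≃g T) (hr : π r = r) (y : V) :
    π '' subSet T r y = subSet T r (π y) := by
  refine (Set.image_subset_iff.2 fun v => map_mem_subSet π hr).antisymm fun w hw => ?_
  refine ⟨π.symm w, ?_, π.apply_symm_apply w⟩
  simpa using map_mem_subSet π.symm (π.symm_apply_eq.2 hr.symm) hw

lemma exists_adj_root_mem_subSet (hT : T.IsTree) {v : V} (hv : v ≠ r) :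
    ∃ y, T.Adj r y ∧ v ∈ subSet T r y := by
  obtain ⟨p, hp, -⟩ := hT.existsUnique_path r v
  cases p with
  | nil => exact absurd rfl hv
  | cons h q => exact ⟨_, h, q, (Walk.cons_isPath_iff h q).1 hp |>.2⟩

lemma eq_of_mem_subSet_of_mem_subSet (hT : T.IsTree) {y₁ y₂ v : V} (h₁ : T.Adj r y₁)
    (h₂ : T.Adj r y₂) (hv₁ : v ∈ subSet T r y₁) (hv₂ : v ∈ subSet T r y₂) : y₁ = y₂ := by
  classical
  obtain ⟨p₁, hp₁⟩ := hv₁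
  obtain ⟨p₂, hp₂⟩ := hv₂
  have hpath : ∀ {y} (h : T.Adj r y) (p : T.Walk y v), r ∉ p.support →
      (Walk.cons h p.bypass).IsPath := fun h p hp =>
    (Walk.cons_isPath_iff h _).2
      ⟨p.bypass_isPath, fun h' => hp (p.support_bypass_subset_support h')⟩
  injection (hT.existsUnique_path r v).unique (hpath h₁ p₁ hp₁) (hpath h₂ p₂ hp₂)

lemma disjoint_subSet (hT : T.IsTree) {y₁ y₂ : V} (h₁ : T.Adj r y₁) (h₂ : T.Adj r y₂)
    (hne : y₁ ≠ y₂) : Disjoint (subSet T r y₁) (subSet T r y₂) :=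
  Set.disjoint_left.2 fun _ hv₁ hv₂ => hne (eq_of_mem_subSet_of_mem_subSet hT h₁ h₂ hv₁ hv₂)

lemma eq_and_eq_of_adj_of_notMem_subSet (hT : T.IsTree) (hy : T.Adj r y) {u v : V}
    (hu : u ∈ subSet T r y) (huv : T.Adj u v) (hv : v ∉ subSet T r y) : u = y ∧ v = r := by
  obtain rfl : v = r := by_contra fun hvr => hv (mem_subSet_of_adj hu huv hvr)
  exact ⟨eq_of_mem_subSet_of_mem_subSet hT huv.symm hy (mem_subSet_self huv.ne) hu, rfl⟩

end Subtrees

section SwapSubtrees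

variable {V : Type*} {T : SimpleGraph V} {r y₁ y₂ : V}

open Classical in
/-- For `y₁ ≠ y₂` this exchanges the subtrees below `y₁` and `y₂` along `e`; for `y₁ = y₂` it
extends the automorphism `e` by the identity. -/
noncomputable def swapFun (e : subTree T r y₁ ≃g subTree T r y₂) (v : V) : V :=
  if h : v ∈ subSet T r y₁ then e ⟨v, h⟩
  else if h : v ∈ subSet T r y₂ then e.symm ⟨v, h⟩ else v

variable (e : subTree T r y₁ ≃g subTree T r y₂)

lemma swapFun_of_mem_left {v : V} (h : v ∈ subSet T r y₁) : swapFun e v = e ⟨v, h⟩ :=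
  dif_pos h

lemma swapFun_of_mem_right {v : V} (h₁ : v ∉ subSet T r y₁) (h : v ∈ subSet T r y₂) :
    swapFun e v = e.symm ⟨v, h⟩ := by
  rw [swapFun, dif_neg h₁, dif_pos h]

lemma swapFun_of_notMem {v : V} (h₁ : v ∉ subSet T r y₁) (h₂ : v ∉ subSet T r y₂) :
    swapFun e v = v := by
  rw [swapFun, dif_neg h₁, dif_neg h₂]

lemma swapFun_root : swapFun e r = r :=
  swapFun_of_notMem e root_notMem_subSet root_notMem_subSet

lemma swapFun_symm (hd : Disjoint (subSet T r y₁) (subSet T r y₂)) :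
    swapFun e.symm = swapFun e := by
  funext v
  by_cases h₁ : v ∈ subSet T r y₁
  · rw [swapFun_of_mem_right _ (Set.disjoint_left.1 hd h₁) h₁, swapFun_of_mem_left]
    rfl
  by_cases h₂ : v ∈ subSet T r y₂
  · rw [swapFun_of_mem_left _ h₂, swapFun_of_mem_right _ h₁ h₂]
  · rw [swapFun_of_notMem _ h₂ h₁, swapFun_of_notMem _ h₁ h₂]

lemma swapFun_symm_swapFun (hT : T.IsTree) (h₁ : T.Adj r y₁) (h₂ : T.Adj r y₂) (v : V) :
    swapFun e.symm (swapFun e v) = v := by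
  by_cases hv₁ : v ∈ subSet T r y₁
  · rw [swapFun_of_mem_left e hv₁, swapFun_of_mem_left e.symm (e ⟨v, hv₁⟩).2]
    simp
  by_cases hv₂ : v ∈ subSet T r y₂
  · have hd := disjoint_subSet hT h₁ h₂ (by rintro rfl; exact hv₁ hv₂)
    have hv' := (e.symm ⟨v, hv₂⟩).2
    rw [swapFun_of_mem_right e hv₁ hv₂,
      swapFun_of_mem_right e.symm (Set.disjoint_left.1 hd hv') hv']
    simp
  · rw [swapFun_of_notMem e hv₁ hv₂, swapFun_of_notMem e.symm hv₂ hv₁]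

variable {e}

lemma adj_swapFun_of_mem_left (hT : T.IsTree) (h₁ : T.Adj r y₁) (h₂ : T.Adj r y₂)
    (he : e (subRoot T r y₁ h₁.ne') = subRoot T r y₂ h₂.ne') {u v : V} (hu : u ∈ subSet T r y₁)
    (huv : T.Adj u v) :
    T.Adj (swapFun e u) (swapFun e v) := by
  by_cases hv : v ∈ subSet T r y₁
  · rw [swapFun_of_mem_left e hu, swapFun_of_mem_left e hv]
    exact e.map_adj_iff.2 huv
  obtain ⟨rfl, rfl⟩ := eq_and_eq_of_adj_of_notMem_subSet hT h₁ hu huv hv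
  rw [swapFun_of_mem_left e hu, swapFun_root]
  exact (congrArg Subtype.val he).symm ▸ h₂.symm

lemma adj_swapFun (hT : T.IsTree) (h₁ : T.Adj r y₁) (h₂ : T.Adj r y₂)
    (he : e (subRoot T r y₁ h₁.ne') = subRoot T r y₂ h₂.ne') {u v : V} (huv : T.Adj u v) :
    T.Adj (swapFun e u) (swapFun e v) := by
  have he' : e.symm (subRoot T r y₂ h₂.ne') = subRoot T r y₁ h₁.ne' := e.symm_apply_eq.2 he.symm
  have key : ∀ {u v : V}, T.Adj u v → u ∈ subSet T r y₁ ∪ subSet T r y₂ →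
      T.Adj (swapFun e u) (swapFun e v) := by
    rintro u v huv (hu | hu)
    · exact adj_swapFun_of_mem_left hT h₁ h₂ he hu huv
    by_cases hu₁ : u ∈ subSet T r y₁
    · exact adj_swapFun_of_mem_left hT h₁ h₂ he hu₁ huv
    rw [← swapFun_symm e (disjoint_subSet hT h₁ h₂ (by rintro rfl; exact hu₁ hu))]
    exact adj_swapFun_of_mem_left hT h₂ h₁ he' hu huv
  by_cases hu : u ∈ subSet T r y₁ ∪ subSet T r y₂
  · exact key huv hu
  by_cases hv : v ∈ subSet T r y₁ ∪ subSet T r y₂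
  · exact (key huv.symm hv).symm
  rw [Set.mem_union, not_or] at hu hv
  rwa [swapFun_of_notMem e hu.1 hu.2, swapFun_of_notMem e hv.1 hv.2]

noncomputable def swapAut (hT : T.IsTree) (h₁ : T.Adj r y₁) (h₂ : T.Adj r y₂)
    (he : e (subRoot T r y₁ h₁.ne') = subRoot T r y₂ h₂.ne') : T ≃g T where
  toFun := swapFun e
  invFun := swapFun e.symm
  left_inv := swapFun_symm_swapFun e hT h₁ h₂
  right_inv := swapFun_symm_swapFun e.symm hT h₂ h₁
  map_rel_iff' {u v} := by
    refine ⟨fun h => ?_, adj_swapFun hT h₁ h₂ he⟩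
    rw [← swapFun_symm_swapFun e hT h₁ h₂ u, ← swapFun_symm_swapFun e hT h₁ h₂ v]
    exact adj_swapFun hT h₂ h₁ (e.symm_apply_eq.2 he.symm) h

lemma swapAut_apply (hT : T.IsTree) (h₁ : T.Adj r y₁) (h₂ : T.Adj r y₂)
    (he : e (subRoot T r y₁ h₁.ne') = subRoot T r y₂ h₂.ne') (v : V) :
    swapAut hT h₁ h₂ he v = swapFun e v :=
  rfl

end SwapSubtrees

section TreeFixingSets

variable {V : Type*} {T : SimpleGraph V} {r y z : V}

lemma adj_root_map (π : T ≃g T) (hr : π r = r) (hy : T.Adj r y) : T.Adj r (π y) :=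
  hr ▸ π.map_adj_iff.2 hy

def restrictSubTree (π : T ≃g T) (hr : π r = r) (h : π y = z) :
    subTree T r y ≃g subTree T r z :=
  π.induce ((Equiv.image_eq_iff_bijOn π.toEquiv).1 (h ▸ image_subSet π hr y))

lemma rootedIso_subTree_map (π : T ≃g T) (hr : π r = r) (hy : T.Adj r y) :
    RootedIso (subTree T r y) (subRoot T r y hy.ne')
      (subTree T r (π y)) (subRoot T r (π y) (adj_root_map π hr hy).ne') :=
  ⟨restrictSubTree π hr rfl, rfl⟩

lemma map_eq_self_of_map_eq_self_of_mem_subSet (hT : T.IsTree) (π : T ≃g T) (hr : π r = r)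
    (hy : T.Adj r y) {v : V} (hv : v ∈ subSet T r y) (hπv : π v = v) : π y = y := by
  have hπv' := map_mem_subSet π hr hv
  rw [hπv] at hπv'
  exact eq_of_mem_subSet_of_mem_subSet hT (adj_root_map π hr hy) hy hπv' hv

lemma IsRFix.preimage_val_subSet (hT : T.IsTree) (hy : T.Adj r y) {S : Set V}
    (hS : IsRFix T r S) :
    IsRFix (subTree T r y) (subRoot T r y hy.ne') (Subtype.val ⁻¹' S) := by
  intro α hα hfix w
  have hπ : ∀ v ∈ S, swapAut hT hy hy hα v = v := by
    intro v hv
    rw [swapAut_apply]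
    by_cases hvy : v ∈ subSet T r y
    · rw [swapFun_of_mem_left α hvy, hfix ⟨v, hvy⟩ hv]
    · exact swapFun_of_notMem α hvy hvy
  have hw := hS _ (swapFun_root α) hπ w
  rw [swapAut_apply, swapFun_of_mem_left α w.2] at hw
  exact Subtype.ext hw

lemma IsRFix.eq_of_rootedIso_of_disjoint (hT : T.IsTree) (hy : T.Adj r y) (hz : T.Adj r z)
    (hiso : RootedIso (subTree T r y) (subRoot T r y hy.ne') (subTree T r z) (subRoot T r z hz.ne'))
    {S : Set V} (hS : IsRFix T r S) (hSy : Disjoint S (subSet T r y))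
    (hSz : Disjoint S (subSet T r z)) : y = z := by
  obtain ⟨e, he⟩ := hiso
  have hπ : ∀ v ∈ S, swapAut hT hy hz he v = v := fun v hv =>
    swapFun_of_notMem e (Set.disjoint_left.1 hSy hv) (Set.disjoint_left.1 hSz hv)
  have hy' := hS _ (swapFun_root e) hπ y
  rw [swapAut_apply, swapFun_of_mem_left e (mem_subSet_self hy.ne')] at hy'
  exact hy'.symm.trans (congrArg Subtype.val he)

lemma isRFix_of_forall_adj_root (hT : T.IsTree) {S : Set V}
    (hchild : ∀ π : T ≃g T, π r = r → (∀ v ∈ S, π v = v) → ∀ y, T.Adj r y → π y = y)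
    (hsub : ∀ y (hy : T.Adj r y),
      IsRFix (subTree T r y) (subRoot T r y hy.ne') (Subtype.val ⁻¹' S)) :
    IsRFix T r S := by
  intro π hr hfix v
  by_cases hv : v = r
  · rw [hv, hr]
  obtain ⟨y, hy, hvy⟩ := exists_adj_root_mem_subSet hT hv
  have hπy := hchild π hr hfix y hy
  exact congrArg Subtype.val (hsub y hy (restrictSubTree π hr hπy) (Subtype.ext hπy)
    (fun w hw => Subtype.ext (hfix w hw)) ⟨v, hvy⟩)

lemma map_eq_self_of_adj_root (U : Set V)
    (hU : ∀ y z (hy : T.Adj r y) (hz : T.Adj r z), y ∈ U → z ∈ U →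
      RootedIso (subTree T r y) (subRoot T r y hy.ne') (subTree T r z) (subRoot T r z hz.ne') →
        y = z)
    (π : T ≃g T) (hr : π r = r) (hπ : ∀ y, T.Adj r y → y ∉ U → π y = y)
    (hy : T.Adj r y) : π y = y := by
  by_cases hyU : y ∈ U
  · by_cases hπyU : π y ∈ U
    · exact (hU _ _ hy (adj_root_map π hr hy) hyU hπyU (rootedIso_subTree_map π hr hy)).symm
    · exact π.injective (hπ _ (adj_root_map π hr hy) hπyU)
  · exact hπ y hy hyU

lemma eq_of_mem_range_of_rootedIso {g : ℕ} (reps : Fin g → V) (hreps : ∀ j, T.Adj r (reps j))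
    (hdistinct : ∀ j k : Fin g, j ≠ k →
      ¬ RootedIso (subTree T r (reps j)) (subRoot T r (reps j) (hreps j).ne')
        (subTree T r (reps k)) (subRoot T r (reps k) (hreps k).ne'))
    (y z : V) (hy : T.Adj r y) (hz : T.Adj r z) (hyr : y ∈ Set.range reps)
    (hzr : z ∈ Set.range reps)
    (hiso : RootedIso (subTree T r y) (subRoot T r y hy.ne')
      (subTree T r z) (subRoot T r z hz.ne')) :
    y = z := by
  obtain ⟨j, rfl⟩ := hyr
  obtain ⟨k, rfl⟩ := hzr
  by_contra hne
  exact hdistinct j k (fun h => hne (h ▸ rfl)) hiso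

lemma IsRFix.rfixNum_subTree_le (hT : T.IsTree) (hy : T.Adj r y) {S : Set V}
    (hS : IsRFix T r S) :
    rfixNum (subTree T r y) (subRoot T r y hy.ne') ≤ (S ∩ subSet T r y).ncard :=
  calc _ ≤ (Subtype.val ⁻¹' S : Set (subSet T r y)).ncard :=
        (hS.preimage_val_subSet hT hy).rfixNum_le
    _ = (S ∩ subSet T r y).ncard := by
        rw [← Set.ncard_image_of_injective _ Subtype.val_injective, Subtype.image_preimage_coe,
          Set.inter_comm]

end TreeFixingSets

section Counting

variable {V : Type*} [Fintype V] {T : SimpleGraph V} [DecidableRel T.Adj] {r : V}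

lemma ncard_iUnion_of_subset_subSet (hT : T.IsTree) (B : {y // T.Adj r y} → Set V)
    (hB : ∀ y, B y ⊆ subSet T r y) : (⋃ y, B y).ncard = ∑ y, (B y).ncard := by
  rw [Set.ncard_iUnion_of_finite (fun _ => Set.toFinite _) fun y z hyz =>
    (disjoint_subSet hT y.2 z.2 (Subtype.coe_ne_coe.2 hyz)).mono (hB y) (hB z),
    finsum_eq_sum_of_fintype]

lemma sum_ncard_inter_subSet_le (hT : T.IsTree) (S : Set V) :
    ∑ y : {y // T.Adj r y}, (S ∩ subSet T r y).ncard ≤ S.ncard := by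
  rw [← ncard_iUnion_of_subset_subSet hT _ fun _ => Set.inter_subset_right]
  exact Set.ncard_le_ncard (Set.iUnion_subset fun _ => Set.inter_subset_left)

lemma rfixNum_le_sum_ncard (hT : T.IsTree) (B : {y // T.Adj r y} → Set V)
    (hBsub : ∀ y, B y ⊆ subSet T r y)
    (hBfix : ∀ y : {y // T.Adj r y},
      IsRFix (subTree T r y) (subRoot T r y y.2.ne') (Subtype.val ⁻¹' B y))
    (hchild : ∀ π : T ≃g T, π r = r → (∀ v ∈ ⋃ y, B y, π v = v) → ∀ y, T.Adj r y → π y = y) :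
    rfixNum T r ≤ ∑ y, (B y).ncard :=
  calc rfixNum T r ≤ (⋃ y, B y).ncard :=
        (isRFix_of_forall_adj_root hT hchild fun y hy => (hBfix ⟨y, hy⟩).mono
          (Set.preimage_mono (Set.subset_iUnion B ⟨y, hy⟩))).rfixNum_le
    _ = ∑ y, (B y).ncard := ncard_iUnion_of_subset_subSet hT B hBsub

/-- Witness: a minimum fixing set in each subtree `T_y` with `Fix(T_y) > 0`, and the root `y` of
each subtree with `Fix(T_y) = 0` unless `y ∈ U`. -/
lemma rfixNum_le_sum (hT : T.IsTree) (U : Set V) [DecidablePred (· ∈ U)]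
    (hU : ∀ y z (hy : T.Adj r y) (hz : T.Adj r z), y ∈ U → z ∈ U →
      RootedIso (subTree T r y) (subRoot T r y hy.ne') (subTree T r z) (subRoot T r z hz.ne') →
        y = z) :
    rfixNum T r ≤ ∑ y : {y // T.Adj r y},
      if rfixNum (subTree T r y) (subRoot T r y y.2.ne') = 0 then (if (y : V) ∈ U then 0 else 1)
      else rfixNum (subTree T r y) (subRoot T r y y.2.ne') := by
  set φ : {y // T.Adj r y} → ℕ := fun y => rfixNum (subTree T r y) (subRoot T r y y.2.ne')
  choose F hFcard hF using fun y : {y // T.Adj r y} =>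
    exists_isRFix_ncard_eq_rfixNum (subTree T r y) (subRoot T r y y.2.ne')
  set B : {y // T.Adj r y} → Set V := fun y =>
    if φ y = 0 then (if (y : V) ∈ U then ∅ else {(y : V)}) else Subtype.val '' F y with hB
  have hBsub : ∀ y, B y ⊆ subSet T r y := by
    intro y
    simp only [hB]
    split_ifs
    exacts [Set.empty_subset _, Set.singleton_subset_iff.2 (mem_subSet_self y.2.ne'),
      Set.image_subset_iff.2 fun v _ => v.2]
  have hBcard : ∀ y, (B y).ncard = if φ y = 0 then (if (y : V) ∈ U then 0 else 1) else φ y := by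
    intro y
    by_cases h0 : φ y = 0
    · by_cases hyU : (y : V) ∈ U <;> simp [hB, h0, hyU]
    · simp only [hB, if_neg h0]
      rw [Set.ncard_image_of_injective _ Subtype.val_injective, hFcard]
  refine (rfixNum_le_sum_ncard hT B hBsub (fun y => ?_) ?_).trans_eq
    (Finset.sum_congr rfl fun y _ => hBcard y)
  · by_cases h0 : φ y = 0
    · exact isRFix_of_rfixNum_eq_zero h0 _
    · simpa [hB, h0] using hF y
  · refine fun π hr hfix y hy => map_eq_self_of_adj_root U hU π hr (fun y hy hyU => ?_) hy
    by_cases h0 : φ ⟨y, hy⟩ = 0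
    · exact hfix y (Set.mem_iUnion.2 ⟨⟨y, hy⟩, by simp [hB, h0, hyU]⟩)
    · obtain ⟨v, hv⟩ : (B ⟨y, hy⟩).Nonempty :=
        Set.nonempty_of_ncard_ne_zero (by simp [hBcard, h0])
      exact map_eq_self_of_map_eq_self_of_mem_subSet hT π hr hy (hBsub _ hv)
        (hfix v (Set.mem_iUnion.2 ⟨_, hv⟩))

end Counting

section Classes

variable {V W : Type*} [Finite V] [Finite W] {T : SimpleGraph V} {r : V} {H : SimpleGraph W}
  {t : W}

lemma IsRFix.le_sum_ncard_inter_subSet (hT : T.IsTree) (s : Finset {y // T.Adj r y})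
    (hs : ∀ y ∈ s, RootedIso (subTree T r y) (subRoot T r y y.2.ne') H t) {S : Set V}
    (hS : IsRFix T r S) :
    (if rfixNum H t = 0 then s.card - 1 else s.card * rfixNum H t) ≤
      ∑ y ∈ s, (S ∩ subSet T r y).ncard := by
  have hdisj : ∀ y : {y // T.Adj r y}, (S ∩ subSet T r y).ncard = 0 →
      Disjoint S (subSet T r y) :=
    fun y h => Set.disjoint_iff_inter_eq_empty.2 ((Set.ncard_eq_zero (Set.toFinite _)).1 h)
  split_ifs with h0
  · exact Finset.card_sub_one_le_sum s _ fun y hy z hz hy0 hz0 => Subtype.ext <|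
      hS.eq_of_rootedIso_of_disjoint hT y.2 z.2 ((hs y hy).trans (hs z hz).symm)
        (hdisj y hy0) (hdisj z hz0)
  · rw [← smul_eq_mul]
    exact Finset.card_nsmul_le_sum s _ _ fun y hy =>
      (hs y hy).rfixNum_eq ▸ hS.rfixNum_subTree_le hT y.2

lemma sum_ite_rfixNum_subTree_eq (U : Set V) [DecidablePred (· ∈ U)]
    (s : Finset {y // T.Adj r y}) {x : {y // T.Adj r y}} (hx : x ∈ s)
    (hU : ∀ y ∈ s, (y : V) ∈ U ↔ y = x)
    (hs : ∀ y ∈ s, RootedIso (subTree T r y) (subRoot T r y y.2.ne') H t) :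
    ∑ y ∈ s, (if rfixNum (subTree T r y) (subRoot T r y y.2.ne') = 0
        then (if (y : V) ∈ U then 0 else 1) else rfixNum (subTree T r y) (subRoot T r y y.2.ne')) =
      if rfixNum H t = 0 then s.card - 1 else s.card * rfixNum H t := by
  classical
  rw [Finset.sum_congr rfl fun y hy => by rw [(hs y hy).rfixNum_eq, if_congr (hU y hy) rfl rfl]]
  split_ifs
  · exact Finset.sum_ite_eq_card_sub_one hx
  · rw [Finset.sum_const, smul_eq_mul]

end Classes

/-- Recursion for the fixing number of a rooted tree:
if the subtrees at the children of the root fall into `g` rooted-isomorphism classes,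
the `j`-th consisting of `m j` copies of `T_j`, then
`Fix(T) = Σ j, (m j - 1 if Fix(T_j) = 0, else m j * Fix(T_j))`. -/
theorem rfixNum_tree {V : Type*} [Fintype V] (T : SimpleGraph V) (r : V)
    (hT : T.IsTree)
    (g : ℕ) (reps : Fin g → V) (hreps : ∀ j, T.Adj r (reps j))
    (cls : V → Fin g)
    (hclsreps : ∀ j, cls (reps j) = j)
    (hiso : ∀ y, (h : T.Adj r y) →
      RootedIso (subTree T r y) (subRoot T r y h.ne')
        (subTree T r (reps (cls y))) (subRoot T r (reps (cls y)) (hreps (cls y)).ne'))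
    (hdistinct : ∀ j k : Fin g, j ≠ k →
      ¬ RootedIso (subTree T r (reps j)) (subRoot T r (reps j) (hreps j).ne')
        (subTree T r (reps k)) (subRoot T r (reps k) (hreps k).ne'))
    (m : Fin g → ℕ) (hm : ∀ j, m j = Nat.card {y : V // T.Adj r y ∧ cls y = j}) :
    rfixNum T r =
      ∑ j : Fin g,
        if rfixNum (subTree T r (reps j)) (subRoot T r (reps j) (hreps j).ne') = 0
        then m j - 1
        else m j * rfixNum (subTree T r (reps j)) (subRoot T r (reps j) (hreps j).ne') := by
  classical
  have hfiber : ∀ j, ∀ y ∈ ({y | cls y = j} : Finset {y // T.Adj r y}),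
      RootedIso (subTree T r y) (subRoot T r y y.2.ne')
        (subTree T r (reps j)) (subRoot T r (reps j) (hreps j).ne') := by
    intro j y hy
    obtain rfl : cls y = j := (Finset.mem_filter.1 hy).2
    exact hiso y y.2
  have hcard : ∀ j, ({y | cls y = j} : Finset {y // T.Adj r y}).card = m j := fun j =>
    (Finset.card_filter_subtype _ (cls ·) j).trans (hm j).symm
  apply le_antisymm
  · have hrange : ∀ j, ∀ y ∈ ({y | cls y = j} : Finset {y // T.Adj r y}),
        (y : V) ∈ Set.range reps ↔ y = ⟨reps j, hreps j⟩ := by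
      intro j y hy
      obtain rfl : cls y = j := (Finset.mem_filter.1 hy).2
      exact ⟨fun h => Subtype.ext (Function.LeftInverse.rightInvOn_range hclsreps h).symm,
        fun h => ⟨cls y, congrArg Subtype.val h.symm⟩⟩
    calc rfixNum T r
        ≤ _ := rfixNum_le_sum hT _ (eq_of_mem_range_of_rootedIso reps hreps hdistinct)
      _ = _ := (Finset.sum_fiberwise _ (fun y : {y // T.Adj r y} => cls y) _).symm
      _ = _ := Finset.sum_congr rfl fun j _ => by
          rw [sum_ite_rfixNum_subTree_eq _ _ (by simp [hclsreps]) (hrange j) (hfiber j), hcard]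
  · obtain ⟨S, hScard, hS⟩ := exists_isRFix_ncard_eq_rfixNum T r
    calc _ ≤ ∑ j, ∑ y ∈ ({y | cls y = j} : Finset {y // T.Adj r y}), (S ∩ subSet T r y).ncard :=
          Finset.sum_le_sum fun j _ => by
            rw [← hcard j]
            exact hS.le_sum_ncard_inter_subSet hT _ (hfiber j)
      _ = ∑ y : {y // T.Adj r y}, (S ∩ subSet T r y).ncard := Finset.sum_fiberwise _ _ _
      _ ≤ S.ncard := sum_ncard_inter_subSet_le hT S
      _ = rfixNum T r := hScard
end

section
/- Let J be a jellyfish graph with head H and legs isomorphic to a rooted tree L, one leg L_v rooted at each vertex v of H, the legs being pairwise disjoint. A labeling φ of J is distinguishing if and only if (i) the restriction φ_v of φ to each leg L_v is a distinguishing labeling of the rooted tree L_v, and (ii) the induced projection labeling φ_proj of H (in which two head vertices get the same color iff their labeled legs are isomorphic as labeled rooted trees) is a distinguishing labeling of H. -/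
open SimpleGraph

/-- The jellyfish graph with head `H` and a copy of the rooted tree `(L, ρ)` attached
(by its root) at each vertex of `H`.  The leg at `a` is `{a} × B`, attached at `(a, ρ)`. -/
def jellyfish {A B : Type*} (H : SimpleGraph A) (L : SimpleGraph B) (ρ : B) :
    SimpleGraph (A × B) where
  Adj x y := (x.2 = ρ ∧ y.2 = ρ ∧ H.Adj x.1 y.1) ∨ (x.1 = y.1 ∧ L.Adj x.2 y.2)
  symm := by
    constructor
    rintro ⟨a, b⟩ ⟨a', b'⟩ (⟨h1, h2, h3⟩ | ⟨h1, h2⟩)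
    · exact Or.inl ⟨h2, h1, h3.symm⟩
    · exact Or.inr ⟨h1.symm, h2.symm⟩
  loopless := by
    constructor
    rintro ⟨a, b⟩ (⟨-, -, h⟩ | ⟨-, h⟩)
    · exact H.loopless.irrefl a h
    · exact L.loopless.irrefl b h


section JellyAux
variable {A B : Type*} {H : SimpleGraph A} {L : SimpleGraph B} {ρ : B}

lemma jelly_adj {x y : A × B} :
    (jellyfish H L ρ).Adj x y ↔
      (x.2 = ρ ∧ y.2 = ρ ∧ H.Adj x.1 y.1) ∨ (x.1 = y.1 ∧ L.Adj x.2 y.2) := Iff.rfl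

/-- Any walk that leaves the leg at `a` passes through the root `(a, ρ)`. -/
lemma exitRoot (a : A) : ∀ {x y : A × B} (p : (jellyfish H L ρ).Walk x y),
    x.1 = a → y.1 ≠ a → (a, ρ) ∈ p.support := by
  intro x y p
  induction p with
  | nil => intro hx hy; exact absurd hx hy
  | @cons u m w h p ih =>
    intro hx hy
    by_cases hu : u.2 = ρ
    · have : u = (a, ρ) := Prod.ext hx hu
      rw [Walk.support_cons, ← this]; exact List.mem_cons_self
    · rcases h with ⟨h1, _, _⟩ | ⟨h1, _⟩
      · exact absurd h1 hu
      · have := ih (h1 ▸ hx) hy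
        exact List.mem_cons_of_mem _ this

/-- A walk whose only possible head vertex is its endpoint stays in the leg of the endpoint. -/
lemma confined (a : A) : ∀ {x y : A × B} (p : (jellyfish H L ρ).Walk x y),
    y.1 = a → (∀ w ∈ p.support, w.2 = ρ → w.1 = a) → ∀ w ∈ p.support, w.1 = a := by
  intro x y p
  induction p with
  | nil => intro hy _ w hw; rw [Walk.support_nil, List.mem_singleton] at hw; subst hw; exact hy
  | @cons u m v h p ih =>
    intro hy hh w hw
    have hp : ∀ w ∈ p.support, w.1 = a := by
      refine ih hy fun w hw hwρ => hh w ?_ hwρ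
      rw [Walk.support_cons]; exact List.mem_cons_of_mem _ hw
    rw [Walk.support_cons, List.mem_cons] at hw
    rcases hw with rfl | hw
    · rcases h with ⟨h1, _, _⟩ | ⟨h1, _⟩
      · exact hh w (by exact List.mem_cons_self) h1
      · exact h1 ▸ hp m p.start_mem_support
    · exact hp w hw

/-- A walk confined to the leg at `a` projects to a walk in `L`. -/
lemma toLegWalk (a : A) : ∀ {x y : A × B} (p : (jellyfish H L ρ).Walk x y),
    (∀ w ∈ p.support, w.1 = a) →
    ∃ q : L.Walk x.2 y.2, q.support = p.support.map Prod.snd := by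
  intro x y p
  induction p with
  | nil => intro _; exact ⟨Walk.nil, by simp⟩
  | @cons u m v h p ih =>
    intro hp
    have hu : u.1 = a := hp u (by simp)
    have hm : m.1 = a :=
      hp m (by rw [Walk.support_cons]; exact List.mem_cons_of_mem _ p.start_mem_support)
    rcases h with ⟨_, _, h3⟩ | ⟨_, h2⟩
    · rw [hu, hm] at h3; exact absurd h3 (H.loopless.irrefl a)
    · obtain ⟨q, hq⟩ :=
        ih fun w hw => hp w (by exact List.mem_cons_of_mem _ hw)
      exact ⟨Walk.cons h2 q, by show u.2 :: q.support = List.map Prod.snd (u :: p.support); simp [hq]⟩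

/-- Every vertex lying on a cycle of the jellyfish is a head vertex. -/
lemma cycle_snd (hL : L.IsAcyclic) {v : A × B} (c : (jellyfish H L ρ).Walk v v)
    (hc : c.IsCycle) : v.2 = ρ := by
  classical
  by_contra hv
  have hc3 := hc.three_le_length
  have hall : ∀ w ∈ c.support, w.1 = v.1 := by
    by_contra hex
    push_neg at hex
    obtain ⟨w, hw, hwa⟩ := hex
    have hq : (v.1, ρ) ∈ (c.takeUntil w hw).support := exitRoot v.1 _ rfl hwa
    have hr : (v.1, ρ) ∈ (c.dropUntil w hw).support := by
      have := exitRoot v.1 (c.dropUntil w hw).reverse rfl hwa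
      rwa [Walk.support_reverse, List.mem_reverse] at this
    have hqt : (v.1, ρ) ∈ (c.takeUntil w hw).support.tail := by
      rcases List.mem_cons.mp ((c.takeUntil w hw).support_eq_cons ▸ hq) with h | h
      · exact absurd (congrArg Prod.snd h).symm hv
      · exact h
    have hrt : (v.1, ρ) ∈ (c.dropUntil w hw).support.tail := by
      rcases List.mem_cons.mp ((c.dropUntil w hw).support_eq_cons ▸ hr) with h | h
      · exact absurd (congrArg Prod.fst h) (Ne.symm hwa)
      · exact h
    have hsplit : c.support.tail
        = (c.takeUntil w hw).support.tail ++ (c.dropUntil w hw).support.tail := by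
      conv_lhs => rw [← c.take_spec hw]
      rw [Walk.support_append, (c.takeUntil w hw).support_eq_cons]
      simp
    have hnd := hc.support_nodup
    rw [hsplit, List.nodup_append] at hnd
    exact hnd.2.2 _ hqt _ hrt rfl
  cases c with
  | nil => exact hc.ne_nil rfl
  | @cons _ m _ h p =>
    have hm1 : m.1 = v.1 :=
      hall m (by rw [Walk.support_cons]; exact List.mem_cons_of_mem _ p.start_mem_support)
    have hadj : L.Adj v.2 m.2 := by
      rcases jelly_adj.mp h with ⟨h1, _, _⟩ | ⟨_, h2⟩
      · exact absurd h1 hv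
      · exact h2
    rw [Walk.cons_isCycle_iff] at hc
    have hps : ∀ w ∈ p.support, w.1 = v.1 := fun w hw =>
      hall w (by rw [Walk.support_cons]; exact List.mem_cons_of_mem _ hw)
    obtain ⟨q, hq⟩ := toLegWalk v.1 p hps
    have hqp : q.IsPath := by
      rw [Walk.isPath_def, hq]
      refine List.Nodup.map_on ?_ (Walk.isPath_def _ |>.mp hc.1)
      intro x hx y hy hxy
      exact Prod.ext ((hps x hx).trans (hps y hy).symm) hxy
    have hsp : (Walk.cons hadj.symm Walk.nil : L.Walk m.2 v.2).IsPath := by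
      simp [Walk.isPath_def, hadj.ne']
    have hEq : q = Walk.cons hadj.symm Walk.nil :=
      congrArg Subtype.val (hL.path_unique ⟨q, hqp⟩ ⟨_, hsp⟩)
    have hlen : p.support.length = 2 := by
      have := congrArg List.length hq
      rw [hEq, List.length_map] at this
      simpa using this.symm
    have : p.length = 1 := by
      have := p.length_support
      omega
    simp [this] at hc3

/-- Every head vertex lies on a cycle (using the Hamiltonian cycle of the head). -/
lemma head_cycle [DecidableEq A] (hH : ∃ (a : A) (p : H.Walk a a), p.IsHamiltonianCycle)
    (a : A) : ∃ c : (jellyfish H L ρ).Walk (a, ρ) (a, ρ), c.IsCycle := by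
  classical
  obtain ⟨a0, p, hp⟩ := hH
  have ha : a ∈ p.support := hp.mem_support a
  let f : H →g jellyfish H L ρ := ⟨fun a => (a, ρ), fun h => Or.inl ⟨rfl, rfl, h⟩⟩
  have hf : Function.Injective f := fun x y h => congrArg Prod.fst h
  exact ⟨(p.rotate a ha).map f, (hp.isCycle.rotate ha).map hf⟩

/-- Builder of jellyfish automorphisms from a head permutation and leg permutations. -/
def jellyIso (g : A ≃ A) (hg : ∀ a a', H.Adj (g a) (g a') ↔ H.Adj a a')
    (k : A → B ≃ B) (hk : ∀ a b b', L.Adj (k a b) (k a b') ↔ L.Adj b b')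
    (hkρ : ∀ a b, k a b = ρ ↔ b = ρ) : jellyfish H L ρ ≃g jellyfish H L ρ where
  toFun x := (g x.1, k x.1 x.2)
  invFun x := (g.symm x.1, (k (g.symm x.1)).symm x.2)
  left_inv x := by simp
  right_inv x := by simp
  map_rel_iff' := by
    rintro ⟨a, b⟩ ⟨a', b'⟩
    show (jellyfish H L ρ).Adj (g a, k a b) (g a', k a' b') ↔ _
    rw [jelly_adj, jelly_adj]
    constructor
    · rintro (⟨h1, h2, h3⟩ | ⟨h1, h2⟩)
      · exact Or.inl ⟨(hkρ _ _).mp h1, (hkρ _ _).mp h2, (hg _ _).mp h3⟩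
      · obtain rfl : a = a' := g.injective h1
        exact Or.inr ⟨rfl, (hk _ _ _).mp h2⟩
    · rintro (⟨h1, h2, h3⟩ | ⟨h1, h2⟩)
      · exact Or.inl ⟨(hkρ _ _).mpr h1, (hkρ _ _).mpr h2, (hg _ _).mpr h3⟩
      · obtain rfl : a = a' := h1
        exact Or.inr ⟨rfl, (hk _ _ _).mpr h2⟩

lemma jellyIso_apply (g : A ≃ A) (hg) (k : A → B ≃ B) (hk) (hkρ) (x : A × B) :
    (jellyIso (H := H) (L := L) (ρ := ρ) g hg k hk hkρ) x = (g x.1, k x.1 x.2) := rfl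

lemma jelly_adj_head {a a' : A} :
    (jellyfish H L ρ).Adj (a, ρ) (a', ρ) ↔ H.Adj a a' := by
  rw [jelly_adj]
  constructor
  · rintro (⟨-, -, h3⟩ | ⟨-, h2⟩)
    · exact h3
    · exact absurd h2 (L.loopless.irrefl ρ)
  · intro h; exact Or.inl ⟨rfl, rfl, h⟩

lemma jelly_adj_leg {a : A} {b b' : B} :
    (jellyfish H L ρ).Adj (a, b) (a, b') ↔ L.Adj b b' := by
  rw [jelly_adj]
  constructor
  · rintro (⟨-, -, h3⟩ | ⟨-, h2⟩)
    · exact absurd h3 (H.loopless.irrefl a)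
    · exact h2
  · intro h; exact Or.inr ⟨rfl, h⟩

end JellyAux


/-- A labeling `φ` of a jellyfish graph `J` is distinguishing iff (i) its restriction to each
leg is a distinguishing labeling of that rooted leg, and (ii) the induced projection onto the
head `H` (two head vertices get the same color iff their labeled legs are isomorphic as
labeled rooted trees) is a distinguishing labeling of `H`. -/


theorem dist_jellyfish_iff {A B : Type*} [Fintype A] [DecidableEq A] [Fintype B]
    (H : SimpleGraph A) (L : SimpleGraph B) (ρ : B)
    (hH : ∃ (a : A) (p : H.Walk a a), p.IsHamiltonianCycle) (hL : L.IsTree)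
    (φ : A × B → ℕ) :
    IsDist (jellyfish H L ρ) φ ↔
      ((∀ a : A, IsRDist L ρ (fun b => φ (a, b))) ∧
       (∀ τ : H ≃g H,
          (∀ a : A, ∃ e : L ≃g L, e ρ = ρ ∧ ∀ b, φ (a, b) = φ (τ a, e b)) →
          ∀ a, τ a = a)) := by
  constructor
  · intro hdist
    constructor
    · -- (i) restrictions to the legs are distinguishing
      intro a π hπρ hπφ
      have hk : ∀ a' b b', L.Adj ((if a' = a then π.toEquiv else Equiv.refl B) b)
          ((if a' = a then π.toEquiv else Equiv.refl B) b') ↔ L.Adj b b' := by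
        intro a' b b'
        rcases eq_or_ne a' a with rfl | h
        · simpa using π.map_adj_iff
        · simp [h]
      have hkρ : ∀ a' b, (if a' = a then π.toEquiv else Equiv.refl B) b = ρ ↔ b = ρ := by
        intro a' b
        rcases eq_or_ne a' a with rfl | h
        · simp only [if_pos rfl]
          exact ⟨fun hb => π.injective (hb.trans hπρ.symm), fun hb => by rw [hb]; exact hπρ⟩
        · simp [h]
      set Φ := jellyIso (H := H) (Equiv.refl A) (fun a a' => show H.Adj ((Equiv.refl A) a) ((Equiv.refl A) a') ↔ H.Adj a a' from Iff.rfl) _ hk hkρ with hΦ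
      have hφΦ : ∀ v, φ (Φ v) = φ v := by
        rintro ⟨a', b⟩
        rw [hΦ, jellyIso_apply]
        rcases eq_or_ne a' a with rfl | h
        · simpa using hπφ b
        · simp [h]
      intro b
      have h2 := hdist Φ hφΦ (a, b)
      rw [hΦ, jellyIso_apply] at h2
      simpa using congrArg Prod.snd h2
    · -- (ii) the projection labeling is distinguishing
      intro τ hτ a
      choose e he hφe using hτ
      have hk : ∀ a b b', L.Adj ((e a).toEquiv b) ((e a).toEquiv b') ↔ L.Adj b b' :=
        fun a b b' => (e a).map_adj_iff
      have hkρ : ∀ a b, (e a).toEquiv b = ρ ↔ b = ρ := fun a b =>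
        ⟨fun hb => (e a).injective (hb.trans (he a).symm), fun hb => by rw [hb]; exact he a⟩
      have hφΦ : ∀ v,
          φ (jellyIso τ.toEquiv (fun _ _ => τ.map_adj_iff) _ hk hkρ v) = φ v := by
        rintro ⟨a, b⟩
        rw [jellyIso_apply]
        exact (hφe a b).symm
      have h2 := hdist _ hφΦ (a, ρ)
      rw [jellyIso_apply] at h2
      exact congrArg Prod.fst h2
  · rintro ⟨hleg, hhead⟩ π hφ
    classical
    have hsnd1 : ∀ (σ : jellyfish H L ρ ≃g jellyfish H L ρ) (a : A) (b : B),
        b = ρ → (σ (a, b)).2 = ρ := by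
      intro σ a b hb
      rw [hb]
      obtain ⟨c, hc⟩ := @head_cycle A B H L ρ _ hH a
      have hinj : Function.Injective (σ.toHom : A × B → A × B) :=
        fun x y h => σ.toEquiv.injective h
      exact cycle_snd hL.2 (c.map σ.toHom) (hc.map hinj)
    have hsnd : ∀ (a : A) (b : B), (π (a, b)).2 = ρ ↔ b = ρ := by
      intro a b
      constructor
      · intro h
        have h2 := hsnd1 π.symm (π (a, b)).1 (π (a, b)).2 h
        rw [Prod.mk.eta, RelIso.symm_apply_apply] at h2
        exact h2
      · exact hsnd1 π a b
    have hfst : ∀ (a : A) (b : B), (π (a, b)).1 = (π (a, ρ)).1 := by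
      intro a b
      obtain ⟨w⟩ := hL.isConnected.preconnected b ρ
      let ℓ : L →g jellyfish H L ρ := ⟨fun b' => (a, b'), fun h => Or.inr ⟨rfl, h⟩⟩
      have hsup : ∀ u ∈ ((w.map ℓ).map π.toHom).support, u.2 = ρ → u.1 = (π (a, ρ)).1 := by
        intro u hu huρ
        rw [Walk.support_map, Walk.support_map, List.map_map] at hu
        obtain ⟨β, hβ, rfl⟩ := List.mem_map.mp hu
        have hβρ : β = ρ := (hsnd a β).mp huρ
        rw [hβρ]
        rfl
      have hconf := confined (π (a, ρ)).1 ((w.map ℓ).map π.toHom) rfl hsup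
      exact hconf _ (Walk.start_mem_support _)
    set g : A → A := fun a => (π (a, ρ)).1 with hgdef
    have hπab : ∀ a b, π (a, b) = (g a, (π (a, b)).2) := fun a b =>
      Prod.ext (hfst a b) rfl
    have hπaρ : ∀ a, π (a, ρ) = (g a, ρ) := fun a =>
      Prod.ext rfl ((hsnd a ρ).mpr rfl)
    have ginj : Function.Injective g := by
      intro a a' h
      have : π (a, ρ) = π (a', ρ) := by rw [hπaρ, hπaρ, h]
      exact congrArg Prod.fst (π.injective this)
    have gbij : Function.Bijective g := Finite.injective_iff_bijective.mp ginj
    have hgadj : ∀ a a', H.Adj (g a) (g a') ↔ H.Adj a a' := by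
      intro a a'
      rw [← jelly_adj_head (L := L) (ρ := ρ), ← hπaρ, ← hπaρ, π.map_adj_iff, jelly_adj_head]
    have einj : ∀ a, Function.Injective (fun b => (π (a, b)).2) := by
      intro a b b' h
      have : π (a, b) = π (a, b') := by
        rw [hπab a b, hπab a b']
        exact Prod.ext rfl h
      exact congrArg Prod.snd (π.injective this)
    have ebij : ∀ a, Function.Bijective (fun b => (π (a, b)).2) :=
      fun a => Finite.injective_iff_bijective.mp (einj a)
    have eadj : ∀ a b b', L.Adj (π (a, b)).2 (π (a, b')).2 ↔ L.Adj b b' := by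
      intro a b b'
      rw [← jelly_adj_leg (H := H) (a := g a), ← hπab, ← hπab, π.map_adj_iff, jelly_adj_leg]
    let τ : H ≃g H := ⟨Equiv.ofBijective g gbij, fun {a a'} => hgadj a a'⟩
    have hτ : ∀ a, τ a = a := by
      apply hhead
      intro a
      refine ⟨⟨Equiv.ofBijective _ (ebij a), fun {b b'} => eadj a b b'⟩, ?_, ?_⟩
      · exact (hsnd a ρ).mpr rfl
      · intro b
        show φ (a, b) = φ (τ a, (π (a, b)).2)
        rw [show ((τ a : A), (π (a, b)).2) = π (a, b) from (hπab a b).symm]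
        exact (hφ (a, b)).symm
    intro v
    obtain ⟨a, b⟩ := v
    have hga : g a = a := hτ a
    have hb : (π (a, b)).2 = b := by
      refine hleg a ⟨Equiv.ofBijective _ (ebij a), fun {b b'} => eadj a b b'⟩
        ((hsnd a ρ).mpr rfl) ?_ b
      intro b'
      show φ (a, (π (a, b')).2) = φ (a, b')
      have h3 : φ (π (a, b')) = φ (a, b') := hφ (a, b')
      rw [hπab a b', hga] at h3
      exact h3
    rw [hπab a b, hga, hb]
end

section
/- Let J be a jellyfish graph with head H and legs isomorphic to the rooted tree L, and let d* = D(H). Then D(J) = min{ c : D(L, c) ≥ d* }, where D(L, c) counts pairwise inequivalent distinguishing labelings of the rooted tree L using at most c colors. -/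
open SimpleGraph

/-!
Every vertex of the head lies on a cycle (the Hamiltonian one), while every leg edge is a bridge
because the legs are trees; hence automorphisms of `J` preserve the head, and by connectedness of
the legs, each automorphism is an automorphism `σ` of `H` together with root-preserving
automorphisms `τ a : L ≃g L` carrying the leg at `a` to the leg at `σ a`. A labeling of `J` is
therefore distinguishing iff every leg receives a rooted-distinguishing labeling and the map
`a ↦ [labeling of leg a]`, with values in the set of `rcountDist L ρ c` equivalence classes, is a
distinguishing labeling of `H`. Such a labeling of `H` exists iff `D(H) ≤ rcountDist L ρ c`.
-/

namespace SimpleGraph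

variable {V W : Type*} {G : SimpleGraph V} {K : SimpleGraph W}

lemma Reachable.map_of_adj (f : V → W) (hf : ∀ u v, G.Adj u v → K.Reachable (f u) (f v))
    {u v : V} (h : G.Reachable u v) : K.Reachable (f u) (f v) := by
  rw [reachable_iff_reflTransGen] at h ⊢
  exact Relation.ReflTransGen.lift' f (fun u v huv => (reachable_iff_reflTransGen _ _).mp
    (hf u v huv)) _ _ h

lemma Reachable.eq_of_adj {α : Type*} (f : V → α) (hf : ∀ u v, G.Adj u v → f u = f v)
    {u v : V} (h : G.Reachable u v) : f u = f v :=
  reachable_bot.mp (h.map_of_adj (K := ⊥) f fun u v huv => reachable_bot.mpr (hf u v huv))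

variable {V' W' : Type*} {G' : SimpleGraph V'} {K' : SimpleGraph W'}

def Iso.restrict (π : K ≃g K') (f : G ↪g K) (f' : G' ↪g K') (g : V → V') (g' : V' → V)
    (hg : ∀ x, π (f x) = f' (g x)) (hg' : ∀ y, π.symm (f' y) = f (g' y)) : G ≃g G' where
  toFun := g
  invFun := g'
  left_inv x := f.injective (by rw [← hg', ← hg, RelIso.symm_apply_apply])
  right_inv y := f'.injective (by rw [← hg, ← hg', RelIso.apply_symm_apply])
  map_rel_iff' {x y} := by
    change G'.Adj (g x) (g y) ↔ _
    rw [← f'.map_adj_iff, ← f.map_adj_iff, ← hg, ← hg, π.map_adj_iff]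

end SimpleGraph

open SimpleGraph

section Distinguishing

variable {V α β : Type*} {G : SimpleGraph V}

lemma IsDist.comp {φ : V → α} (h : IsDist G φ) {f : α → β} (hf : f.Injective) :
    IsDist G (f ∘ φ) :=
  fun π hπ => h π fun v => hf (hπ v)

lemma exists_isDist_iff_distNum_le [Finite V] [Finite α] :
    (∃ φ : V → α, IsDist G φ) ↔ distNum G ≤ Nat.card α := by
  let e := Finite.equivFin α
  constructor
  · rintro ⟨φ, hφ⟩
    exact Nat.sInf_le ⟨e ∘ φ, hφ.comp e.injective⟩
  · intro h
    have hne : {c : ℕ | ∃ φ : V → Fin c, IsDist G φ}.Nonempty :=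
      ⟨_, Finite.equivFin V, fun π hπ v => (Finite.equivFin V).injective (hπ v)⟩
    obtain ⟨φ, hφ⟩ := Nat.sInf_mem hne
    exact ⟨e.symm ∘ Fin.castLE h ∘ φ, (hφ.comp (Fin.castLE_injective h)).comp e.symm.injective⟩

end Distinguishing

section RootedClasses

variable {B : Type*} (L : SimpleGraph B) (ρ : B) (c : ℕ)

def RDistRel (φ ψ : {φ : B → Fin c // IsRDist L ρ φ}) : Prop :=
  ∃ π : L ≃g L, π ρ = ρ ∧ ∀ v, φ.1 v = ψ.1 (π v)

abbrev RDistClass : Type _ := Quot (RDistRel L ρ c)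

lemma rcountDist_eq_card : rcountDist L ρ c = Nat.card (RDistClass L ρ c) := rfl

lemma RDistRel.equivalence : Equivalence (RDistRel L ρ c) where
  refl _ := ⟨RelIso.refl L.Adj, rfl, fun _ => rfl⟩
  symm := by
    rintro φ ψ ⟨π, hπρ, hπ⟩
    refine ⟨π.symm, ?_, fun v => ?_⟩
    · rw [RelIso.symm_apply_eq, hπρ]
    · rw [hπ, RelIso.apply_symm_apply]
  trans := by
    rintro φ ψ χ ⟨π, hπρ, hπ⟩ ⟨π', hπ'ρ, hπ'⟩
    exact ⟨π.trans π', by simp [hπρ, hπ'ρ], fun v => (hπ v).trans (hπ' (π v))⟩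

variable {L ρ c}

lemma RDistClass.mk_eq_mk_iff {φ ψ : {φ : B → Fin c // IsRDist L ρ φ}} :
    (Quot.mk _ φ : RDistClass L ρ c) = Quot.mk _ ψ ↔ RDistRel L ρ c φ ψ := by
  rw [Quot.eq, (RDistRel.equivalence L ρ c).eqvGen_iff]

end RootedClasses

namespace jellyfish

variable {A B : Type*} {H : SimpleGraph A} {L : SimpleGraph B} {ρ : B}

lemma adj_iff {x y : A × B} : (jellyfish H L ρ).Adj x y ↔
    (x.2 = ρ ∧ y.2 = ρ ∧ H.Adj x.1 y.1) ∨ (x.1 = y.1 ∧ L.Adj x.2 y.2) := Iff.rfl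

variable (H L ρ) in
def headEmbedding : H ↪g jellyfish H L ρ where
  toFun a := (a, ρ)
  inj' _ _ h := congrArg Prod.fst h
  map_rel_iff' {a a'} := by
    change (jellyfish H L ρ).Adj (a, ρ) (a', ρ) ↔ _
    simp [adj_iff]

variable (H L ρ) in
def legEmbedding (a : A) : L ↪g jellyfish H L ρ where
  toFun b := (a, b)
  inj' _ _ h := congrArg Prod.snd h
  map_rel_iff' {b b'} := by
    change (jellyfish H L ρ).Adj (a, b) (a, b') ↔ _
    simp [adj_iff]

lemma isBridge_leg (hL : L.IsAcyclic) (a : A) {b y : B} (hby : L.Adj b y) :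
    (jellyfish H L ρ).IsBridge s((a, b), (a, y)) := by
  classical
  refine isBridge_iff.mpr fun h => isAcyclic_iff_forall_adj_isBridge.mp hL hby ?_
  -- collapse every leg but the one at `a` onto the root
  have hproj : ∀ u v, ((jellyfish H L ρ).deleteEdges {s((a, b), (a, y))}).Adj u v →
      (L.deleteEdges {s(b, y)}).Reachable (if u.1 = a then u.2 else ρ)
        (if v.1 = a then v.2 else ρ) := by
    rintro ⟨x, z⟩ ⟨x', z'⟩ ⟨⟨rfl, rfl, -⟩ | ⟨rfl, hzz'⟩, hne⟩
    · simp
    · by_cases hx : x = a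
      · subst hx
        have := hzz'.ne
        refine Adj.reachable ?_
        simp_all
      · simp [hx]
  simpa using h.map_of_adj _ hproj

lemma snd_eq_root_of_mem_cycle (hL : L.IsAcyclic) {u v : A × B}
    {p : (jellyfish H L ρ).Walk u u} (hp : p.IsCycle) (hv : v ∈ p.support) : v.2 = ρ := by
  by_contra hvρ
  obtain ⟨e, he, hve⟩ := (Walk.mem_support_iff_exists_mem_edges_of_not_nil hp.not_nil).mp hv
  obtain ⟨w, rfl⟩ := Sym2.mem_iff_exists.mp hve
  obtain ⟨a, b⟩ := v
  obtain ⟨a', b'⟩ := w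
  rcases p.adj_of_mem_edges he with ⟨hb, -, -⟩ | ⟨rfl, hbb'⟩
  · exact hvρ hb
  · exact (isBridge_leg hL a hbb').notMem_edges_of_isCycle hp he

section IsoMk

variable (σ : H ≃g H) (τ : A → L ≃g L) (hτ : ∀ a, τ a ρ = ρ)

def isoMk : jellyfish H L ρ ≃g jellyfish H L ρ where
  toEquiv := Equiv.prodShear σ.toEquiv fun a => (τ a).toEquiv
  map_rel_iff' {x y} := by
    obtain ⟨a, b⟩ := x
    obtain ⟨a', b'⟩ := y
    change (jellyfish H L ρ).Adj (σ a, τ a b) (σ a', τ a' b') ↔ _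
    simp only [adj_iff, (τ a).injective.eq_iff' (hτ a), (τ a').injective.eq_iff' (hτ a'),
      σ.map_adj_iff, σ.injective.eq_iff]
    refine or_congr Iff.rfl (and_congr_right fun h => ?_)
    subst h
    exact (τ a).map_adj_iff

@[simp]
lemma isoMk_apply (a : A) (b : B) : isoMk σ τ hτ (a, b) = (σ a, τ a b) := rfl

end IsoMk

section Automorphisms

variable (hH : ∀ a, ∃ (u : A) (p : H.Walk u u), p.IsCycle ∧ a ∈ p.support)
include hH

lemma iso_apply_head_snd (hL : L.IsAcyclic) (π : jellyfish H L ρ ≃g jellyfish H L ρ) (a : A) :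
    (π (a, ρ)).2 = ρ := by
  obtain ⟨u, p, hp, ha⟩ := hH a
  let f : H ↪g jellyfish H L ρ := π.toEmbedding.comp (headEmbedding H L ρ)
  refine snd_eq_root_of_mem_cycle hL (p := p.map f.toHom) ?_ ?_
  · exact (Walk.isCycle_map_iff_of_injective f.injective).mpr hp
  · rw [Walk.support_map]
    exact List.mem_map_of_mem ha

lemma iso_apply_snd_eq_root_iff (hL : L.IsAcyclic) (π : jellyfish H L ρ ≃g jellyfish H L ρ)
    (v : A × B) : (π v).2 = ρ ↔ v.2 = ρ := by
  refine ⟨fun h => ?_, fun h => ?_⟩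
  · have hv : π v = ((π v).1, ρ) := Prod.ext rfl h
    simpa [← hv] using iso_apply_head_snd hH hL π.symm (π v).1
  · simpa [← h] using iso_apply_head_snd hH hL π v.1

lemma iso_apply_fst (hL : L.IsTree) (π : jellyfish H L ρ ≃g jellyfish H L ρ) (a : A) (b : B) :
    (π (a, b)).1 = (π (a, ρ)).1 := by
  refine (hL.connected.preconnected b ρ).eq_of_adj (fun b => (π (a, b)).1) fun b b' hbb' => ?_
  rcases π.map_adj_iff.mpr (show (jellyfish H L ρ).Adj (a, b) (a, b') from Or.inr ⟨rfl, hbb'⟩)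
    with ⟨hb, hb', -⟩ | ⟨h, -⟩
  · rw [iso_apply_snd_eq_root_iff hH hL.isAcyclic] at hb hb'
    exact absurd ((hb : b = ρ).trans (hb' : b' = ρ).symm) hbb'.ne
  · exact h

theorem exists_iso_apply_eq (hL : L.IsTree) (π : jellyfish H L ρ ≃g jellyfish H L ρ) :
    ∃ (σ : H ≃g H) (τ : A → L ≃g L), (∀ a, τ a ρ = ρ) ∧ ∀ a b, π (a, b) = (σ a, τ a b) := by
  have hhead : ∀ (π : jellyfish H L ρ ≃g jellyfish H L ρ) a, π (a, ρ) = ((π (a, ρ)).1, ρ) :=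
    fun π a => Prod.ext rfl (iso_apply_head_snd hH hL.isAcyclic π a)
  let σ : H ≃g H := π.restrict (headEmbedding H L ρ) (headEmbedding H L ρ)
    (fun a => (π (a, ρ)).1) (fun a => (π.symm (a, ρ)).1) (hhead π) (hhead π.symm)
  have hleg : ∀ a b, π (a, b) = (σ a, (π (a, b)).2) :=
    fun a b => Prod.ext (iso_apply_fst hH hL π a b) rfl
  have hleg_symm : ∀ a b, π.symm (σ a, b) = (a, (π.symm (σ a, b)).2) := by
    refine fun a b => Prod.ext ?_ rfl
    rw [iso_apply_fst hH hL π.symm]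
    change (π.symm ((π (a, ρ)).1, ρ)).1 = a
    rw [← hhead π a, RelIso.symm_apply_apply]
  refine ⟨σ, fun a => π.restrict (legEmbedding H L ρ a) (legEmbedding H L ρ (σ a))
    (fun b => (π (a, b)).2) (fun b => (π.symm (σ a, b)).2) (hleg a) (hleg_symm a),
    fun a => iso_apply_head_snd hH hL.isAcyclic π a, hleg⟩

end Automorphisms

variable {α : Type*}

lemma isRDist_leg {φ : A × B → α} (hφ : IsDist (jellyfish H L ρ) φ) (a : A) :
    IsRDist L ρ fun b => φ (a, b) := by
  classical
  intro τ hτρ hτφ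
  let T : A → L ≃g L := Function.update (fun _ => RelIso.refl L.Adj) a τ
  have hT : ∀ x, T x ρ = ρ := fun x => by
    by_cases hx : x = a
    · subst hx; simpa [T] using hτρ
    · simp [T, hx]
  have hid := hφ (isoMk (RelIso.refl H.Adj) T hT) fun ⟨x, b⟩ => by
    by_cases hx : x = a
    · subst hx; simpa [T] using hτφ b
    · simp [T, hx]
  intro b
  simpa [T] using congrArg Prod.snd (hid (a, b))

variable {c : ℕ}

def legClass (φ : A × B → Fin c) (hφ : IsDist (jellyfish H L ρ) φ) (a : A) : RDistClass L ρ c :=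
  Quot.mk _ ⟨fun b => φ (a, b), isRDist_leg hφ a⟩

lemma isDist_legClass {φ : A × B → Fin c} (hφ : IsDist (jellyfish H L ρ) φ) :
    IsDist H (legClass φ hφ) := by
  intro σ hσ
  have hrel : ∀ a, ∃ τ : L ≃g L, τ ρ = ρ ∧ ∀ b, φ (σ a, b) = φ (a, τ b) :=
    fun a => RDistClass.mk_eq_mk_iff.mp (hσ a)
  choose τ hτρ hτ using hrel
  have hτρ' : ∀ a, (τ a).symm ρ = ρ := fun a => by rw [RelIso.symm_apply_eq, hτρ]
  have hid := hφ (isoMk σ (fun a => (τ a).symm) hτρ') fun ⟨a, b⟩ => by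
    simpa using hτ a ((τ a).symm b)
  exact fun a => congrArg Prod.fst (hid (a, ρ))

lemma isDist_of_isDist_head (hH : ∀ a, ∃ (u : A) (p : H.Walk u u), p.IsCycle ∧ a ∈ p.support)
    (hL : L.IsTree) {ψ : A → RDistClass L ρ c} (hψ : IsDist H ψ) :
    IsDist (jellyfish H L ρ) fun v => (ψ v.1).out.1 v.2 := by
  intro π hπ
  obtain ⟨σ, τ, hτρ, hπ_apply⟩ := exists_iso_apply_eq hH hL π
  have hσ : ∀ a, σ a = a := hψ σ fun a => by
    rw [← Quot.out_eq (ψ (σ a)), ← Quot.out_eq (ψ a)]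
    refine Quot.sound ⟨(τ a).symm, by rw [RelIso.symm_apply_eq, hτρ], fun b => ?_⟩
    simpa [hπ_apply] using hπ (a, (τ a).symm b)
  rintro ⟨a, b⟩
  have hτ : ∀ b, τ a b = b := (ψ a).out.2 (τ a) (hτρ a) fun b => by
    simpa [hπ_apply, hσ] using hπ (a, b)
  rw [hπ_apply, hσ, hτ]

end jellyfish

/-- For a jellyfish graph `J` with head `H` and legs isomorphic to the rooted tree `(L, ρ)`,
`D(J) = min {c : D(L, c) ≥ D(H)}`. -/
theorem dist_jellyfish {A B : Type*} [Fintype A] [DecidableEq A] [Fintype B]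
    (H : SimpleGraph A) (L : SimpleGraph B) (ρ : B)
    (hH : ∃ (a : A) (p : H.Walk a a), p.IsHamiltonianCycle) (hL : L.IsTree) :
    distNum (jellyfish H L ρ) = sInf {c : ℕ | distNum H ≤ rcountDist L ρ c} := by
  have hcycle : ∀ a, ∃ (u : A) (p : H.Walk u u), p.IsCycle ∧ a ∈ p.support :=
    fun a => let ⟨u, p, hp⟩ := hH; ⟨u, p, hp.isCycle, hp.mem_support a⟩
  refine congrArg sInf (Set.ext fun c => ?_)
  change (∃ φ : A × B → Fin c, _) ↔ distNum H ≤ rcountDist L ρ c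
  rw [rcountDist_eq_card, ← exists_isDist_iff_distNum_le]
  exact ⟨fun ⟨φ, hφ⟩ => ⟨_, jellyfish.isDist_legClass hφ⟩,
    fun ⟨ψ, hψ⟩ => ⟨_, jellyfish.isDist_of_isDist_head hcycle hL hψ⟩⟩
end
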